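/- Let λ₁,…,λₙ be distinct elements of a field of characteristic zero, 0 < k < n, and let s_μ denote the Schur polynomial in k variables for a partition μ with at most k parts, each part at most n−k. Then ∑_{I⊂[n],|I|=k} s_μ(λ_I) / ∏_{i∈I}∏_{j∈Iᶜ}(λ_i−λ_j) = 1 if μ = ((n−k)^k) is the full rectangle, and 0 otherwise. -/

import Mathlib

/-
Let `w i = ∏_{j ≠ i} (λ i - λ j)⁻¹` be the nodal weights. Interpolating `X ^ m` at the nodes
shows that the moments `∑ i, w i * λ i ^ m` vanish for `m < n - 1` and equal `1` for `m = n - 1`.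
Let `W` be the `k × n` matrix `(w i * λ i ^ u)` and `A` the `n × k` matrix
`(λ i ^ (μ j + k - 1 - j))`. The `I`-minor of `W` is `∏_{i ∈ I} w i` times a Vandermonde
determinant, i.e. `(Δ(λ_I) * ∏_{i ∈ I, j ∉ I} (λ i - λ j))⁻¹`, so by Cauchy–Binet the sum is
`det (W * A)`. The entries of `W * A` are moments: for the full rectangle `W * A` is
unitriangular, and otherwise `μ (k - 1) < n - k` makes its last column vanish.
-/

open Finset

/-- The Schur polynomial `s_μ` evaluated at distinct points `v`, via the bialternant
formula: `det(v i ^ (μ j + k - 1 - j)) / det(v i ^ (k - 1 - j))`. -/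
noncomputable def schurEval {F : Type*} [Field F] (k : ℕ) (μ : Fin k → ℕ)
    (v : Fin k → F) : F :=
  (Matrix.of fun i j : Fin k => v i ^ (μ j + (k - 1 - (j : ℕ)))).det /
    (Matrix.of fun i j : Fin k => v i ^ (k - 1 - (j : ℕ))).det

open Matrix Polynomial Lagrange

theorem Finset.prod_orderEmbOfFin {ι M : Type*} [LinearOrder ι] [CommMonoid M] (I : Finset ι)
    {k : ℕ} (hI : I.card = k) (f : ι → M) : ∏ i ∈ I, f i = ∏ p, f (I.orderEmbOfFin hI p) := by
  conv_lhs => rw [← map_orderEmbOfFin_univ I hI]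
  rw [prod_map]
  rfl

theorem Function.Injective.exists_orderEmbOfFin_comp_perm {κ : Type*} [LinearOrder κ] {k : ℕ}
    {p : Fin k → κ} (hp : Function.Injective p) :
    ∃ (I : {s : Finset κ // s.card = k}) (σ : Equiv.Perm (Fin k)),
      I.1.orderEmbOfFin I.2 ∘ σ = p := by
  classical
  let I : Finset κ := univ.image p
  have hI : I.card = k := by simp [I, card_image_of_injective _ hp]
  have hrange : Set.range p = Set.range (I.orderEmbOfFin hI) := by
    simp [I, range_orderEmbOfFin]
  refine ⟨⟨I, hI⟩, (Equiv.ofInjective p hp).trans ((Equiv.setCongr hrange).trans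
    (Equiv.ofInjective _ (I.orderEmbOfFin hI).injective).symm), funext fun i => ?_⟩
  simp [Equiv.apply_ofInjective_symm]

namespace Matrix

variable {R : Type*} [CommRing R]

theorem det_mul_eq_sum_prod_mul_det_submatrix {ι κ : Type*} [Fintype ι] [DecidableEq ι]
    [Fintype κ] (B : Matrix ι κ R) (A : Matrix κ ι R) :
    (B * A).det = ∑ p : ι → κ, (∏ i, B i (p i)) * (A.submatrix p id).det := by
  have hrows : (B * A).det = detRowAlternating.toMultilinearMap (fun i => ∑ j, B i j • A j) := by
    congr 1
    ext i l
    simp [mul_apply]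
  rw [hrows, MultilinearMap.map_sum]
  refine sum_congr rfl fun p _ => ?_
  rw [MultilinearMap.map_smul_univ, smul_eq_mul]
  rfl

theorem det_submatrix_mul_det_submatrix_eq_sum_perm {κ : Type*} {k : ℕ}
    (B : Matrix (Fin k) κ R) (A : Matrix κ (Fin k) R) (e : Fin k → κ) :
    (B.submatrix id e).det * (A.submatrix e id).det =
      ∑ σ : Equiv.Perm (Fin k), (∏ i, B i (e (σ i))) * (A.submatrix (e ∘ σ) id).det := by
  rw [← det_transpose, det_apply', sum_mul]
  refine sum_congr rfl fun σ _ => ?_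
  rw [show A.submatrix (e ∘ σ) id = (A.submatrix e id).submatrix σ id from rfl, det_permute]
  simp only [transpose_apply, submatrix_apply, id]
  ring

theorem det_mul_eq_sum_det_submatrix_mul {κ : Type*} [LinearOrder κ] [Fintype κ] {k : ℕ}
    (B : Matrix (Fin k) κ R) (A : Matrix κ (Fin k) R) :
    (B * A).det = ∑ I : {s : Finset κ // s.card = k},
      (B.submatrix id (I.1.orderEmbOfFin I.2)).det *
        (A.submatrix (I.1.orderEmbOfFin I.2) id).det := by
  simp_rw [det_submatrix_mul_det_submatrix_eq_sum_perm, ← Fintype.sum_prod_type']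
  rw [det_mul_eq_sum_prod_mul_det_submatrix]
  refine (sum_of_injOn (fun Iσ : {s : Finset κ // s.card = k} × Equiv.Perm (Fin k) =>
    ⇑(Iσ.1.1.orderEmbOfFin Iσ.1.2) ∘ ⇑Iσ.2) ?_ (fun _ _ => mem_coe.2 (mem_univ _)) ?_
    fun _ _ => rfl).symm
  · rintro ⟨⟨I, hI⟩, σ⟩ - ⟨⟨J, hJ⟩, τ⟩ - h
    have hIJ : I = J := by
      have := congrArg Set.range h
      simp only [Set.range_comp, Equiv.range_eq_univ, Set.image_univ, range_orderEmbOfFin] at this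
      exact_mod_cast this
    subst hIJ
    have hστ : σ = τ := Equiv.ext fun i => (I.orderEmbOfFin hI).injective (congrFun h i)
    rw [hστ]
  · intro p _ hp
    have hnot : ¬Function.Injective p := fun hinj => by
      obtain ⟨I, σ, rfl⟩ := hinj.exists_orderEmbOfFin_comp_perm
      exact hp ⟨(I, σ), by simp⟩
    obtain ⟨i, j, hij, hne⟩ : ∃ i j, p i = p j ∧ i ≠ j := by
      simpa [Function.Injective] using hnot
    exact mul_eq_zero_of_right _ (det_zero_of_row_eq hne (funext fun l => by simp [hij]))

theorem det_of_pow_sub_eq_prod {k : ℕ} (x : Fin k → R) :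
    (of fun i j : Fin k => x i ^ (k - 1 - (j : ℕ))).det = ∏ i, ∏ j ∈ Ioi i, (x i - x j) := by
  have h : (of fun i j : Fin k => x i ^ (k - 1 - (j : ℕ))) = projVandermonde 1 x := by
    ext i j
    simp only [of_apply, projVandermonde_apply, Pi.one_apply, one_pow, one_mul, Fin.val_rev]
    congr 1
    omega
  simp [h, det_projVandermonde]

theorem prod_prod_erase_sub_eq_det_vandermonde_mul {k : ℕ} (x : Fin k → R) :
    ∏ i, ∏ j ∈ univ.erase i, (x i - x j) =
      (vandermonde x).det * ∏ i, ∏ j ∈ Ioi i, (x i - x j) := by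
  have hsplit : ∀ i : Fin k, univ.erase i = Ioi i ∪ Iio i := fun i => by
    ext j
    simp [lt_or_lt_iff_ne, eq_comm]
  simp_rw [hsplit, prod_union (disjoint_Ioi_Iio _), prod_mul_distrib, det_vandermonde, mul_comm]
  congr 1
  exact prod_comm' (by simp)

theorem det_of_shifted_exponents_eq_ite {N k : ℕ} (hkN : k ≤ N)
    {c : ℕ → R} (hc : ∀ m < N, c m = if m = N - 1 then 1 else 0)
    {μ : Fin k → ℕ} (hμ : Antitone μ) (hμle : ∀ j, μ j ≤ N - k) :
    (of fun u j : Fin k => c (u + (μ j + (k - 1 - j)))).det =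
      if μ = fun _ => N - k then 1 else 0 := by
  split_ifs with hrect
  · subst hrect
    rw [det_of_isLowerTriangular]
    · refine prod_eq_one fun j _ => ?_
      have := j.2
      simp only [of_apply]
      rw [hc _ (by omega), if_pos (by omega)]
    · intro u j (huj : u < j)
      have := j.2
      simp only [of_apply]
      rw [hc _ (by omega), if_neg (by omega)]
  · obtain ⟨j₀, hj₀⟩ : ∃ j, μ j ≠ N - k := by
      by_contra! h
      exact hrect (funext h)
    let last : Fin k := ⟨k - 1, by have := j₀.2; omega⟩
    have hlast : μ last < N - k :=
      (hμ (Fin.le_def.2 (by simp only [last]; omega))).trans_lt (lt_of_le_of_ne (hμle j₀) hj₀)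
    refine det_eq_zero_of_column_eq_zero last fun u => ?_
    have := u.2
    have hval : (last : ℕ) = k - 1 := rfl
    rw [of_apply, hc _ (by omega), if_neg (by omega)]

end Matrix

namespace Lagrange

variable {F ι : Type*} [Field F]

theorem sum_nodalWeight_mul_eval [DecidableEq ι] {s : Finset ι} {v : ι → F}
    (hvs : Set.InjOn v s) {f : F[X]} (hf : f.degree < #s) :
    ∑ i ∈ s, nodalWeight s v i * f.eval (v i) = f.coeff (#s - 1) := by
  conv_rhs => rw [eq_interpolate hvs hf, interpolate_apply, finsetSum_coeff]
  refine sum_congr rfl fun i hi => ?_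
  rw [coeff_C_mul, ← natDegree_basis hvs hi, coeff_natDegree, leadingCoeff_basis hvs hi,
    nodalWeight, prod_inv_distrib, mul_comm]

theorem sum_nodalWeight_mul_pow [DecidableEq ι] {s : Finset ι} {v : ι → F}
    (hvs : Set.InjOn v s) {m : ℕ} (hm : m < #s) :
    ∑ i ∈ s, nodalWeight s v i * v i ^ m = if m = #s - 1 then 1 else 0 := by
  have := sum_nodalWeight_mul_eval hvs (f := X ^ m) (by rw [degree_X_pow]; exact_mod_cast hm)
  simpa [coeff_X_pow, eq_comm] using this

theorem prod_nodalWeight_of_subset [DecidableEq ι] {s t : Finset ι} {v : ι → F} (hts : t ⊆ s) :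
    ∏ i ∈ t, nodalWeight s v i =
      ((∏ i ∈ t, ∏ j ∈ t.erase i, (v i - v j)) * ∏ i ∈ t, ∏ j ∈ s \ t, (v i - v j))⁻¹ := by
  rw [← prod_mul_distrib, ← prod_inv_distrib]
  refine prod_congr rfl fun i hi => ?_
  have hsplit : s.erase i = t.erase i ∪ s \ t := by
    ext j
    by_cases hj : j ∈ t
    · simp [hj, hts hj]
    · simp [hj, ne_of_mem_of_not_mem hi hj |>.symm]
  rw [nodalWeight, prod_inv_distrib, hsplit,
    prod_union (disjoint_sdiff.mono_left (erase_subset i t))]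

variable [Fintype ι] [LinearOrder ι]

noncomputable def nodalMomentMatrix (k : ℕ) (v : ι → F) : Matrix (Fin k) ι F :=
  of fun u i => nodalWeight univ v i * v i ^ (u : ℕ)

theorem det_nodalMomentMatrix_submatrix {v : ι → F} (hv : Function.Injective v)
    (I : Finset ι) {k : ℕ} (hI : I.card = k) :
    ((nodalMomentMatrix k v).submatrix id (I.orderEmbOfFin hI)).det =
      ((∏ p, ∏ q ∈ Ioi p, (v (I.orderEmbOfFin hI p) - v (I.orderEmbOfFin hI q))) *
        ∏ i ∈ I, ∏ j ∈ Iᶜ, (v i - v j))⁻¹ := by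
  set e := I.orderEmbOfFin hI
  have hrows : (nodalMomentMatrix k v).submatrix id e =
      of fun u p => nodalWeight univ v (e p) * (vandermonde (v ∘ e))ᵀ u p := rfl
  have hinner : ∏ i ∈ I, ∏ j ∈ I.erase i, (v i - v j) =
      ∏ p, ∏ q ∈ univ.erase p, (v (e p) - v (e q)) := by
    rw [prod_orderEmbOfFin I hI]
    refine prod_congr rfl fun p _ => ?_
    have herase : I.erase (e p) = (univ.erase p).map e.toEmbedding := by
      rw [map_erase, map_orderEmbOfFin_univ]
      rfl
    rw [herase, prod_map]
    rfl
  have hVD := prod_prod_erase_sub_eq_det_vandermonde_mul (v ∘ e)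
  simp only [Function.comp_apply] at hVD
  have hV : (vandermonde (v ∘ e)).det ≠ 0 :=
    det_vandermonde_ne_zero_iff.2 (hv.comp e.injective)
  rw [hrows, det_mul_row, det_transpose, ← prod_orderEmbOfFin I hI,
    prod_nodalWeight_of_subset (subset_univ I), ← compl_eq_univ_sdiff, hinner, hVD]
  field_simp

end Lagrange

theorem sum_schur_div_prod_general {F : Type*} [Field F]
    (n k : ℕ) (hk : k < n)
    (lam : Fin n → F) (hlam : Function.Injective lam)
    (μ : Fin k → ℕ) (hμ : Antitone μ) (hμle : ∀ i, μ i ≤ n - k) :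
    ∑ I : {s : Finset (Fin n) // s.card = k},
        schurEval k μ (fun i => lam ((I.1.orderIsoOfFin I.2) i : Fin n)) /
          ∏ i ∈ I.1, ∏ j ∈ I.1ᶜ, (lam i - lam j) =
      (if μ = fun _ => n - k then (1 : F) else 0) := by
  let A : Matrix (Fin n) (Fin k) F := of fun i j => lam i ^ (μ j + (k - 1 - (j : ℕ)))
  have hterm : ∀ I : {s : Finset (Fin n) // s.card = k},
      schurEval k μ (fun i => lam ((I.1.orderIsoOfFin I.2) i : Fin n)) /
          ∏ i ∈ I.1, ∏ j ∈ I.1ᶜ, (lam i - lam j) =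
        ((nodalMomentMatrix k lam).submatrix id (I.1.orderEmbOfFin I.2)).det *
          (A.submatrix (I.1.orderEmbOfFin I.2) id).det := fun I => by
    rw [det_nodalMomentMatrix_submatrix hlam, schurEval, det_of_pow_sub_eq_prod, div_div,
      div_eq_inv_mul]
    rfl
  let c : ℕ → F := fun m => ∑ i, nodalWeight univ lam i * lam i ^ m
  have hmoments : nodalMomentMatrix k lam * A = of fun u j : Fin k =>
      c (u + (μ j + (k - 1 - j))) := by
    ext u j
    simp [A, c, nodalMomentMatrix, mul_apply, pow_add, mul_assoc]
  have hc : ∀ m < n, c m = if m = n - 1 then 1 else 0 := fun m hm => by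
    simpa using sum_nodalWeight_mul_pow hlam.injOn (s := univ) (by simpa using hm)
  rw [sum_congr rfl fun I _ => hterm I, ← det_mul_eq_sum_det_submatrix_mul, hmoments,
    det_of_shifted_exponents_eq_ite hk.le hc hμ hμle]

theorem sum_schur_div_prod {F : Type*} [Field F] [CharZero F]
    (n k : ℕ) (hk0 : 0 < k) (hk : k < n)
    (lam : Fin n → F) (hlam : Function.Injective lam)
    (μ : Fin k → ℕ) (hμ : Antitone μ) (hμle : ∀ i, μ i ≤ n - k) :
    ∑ I : {s : Finset (Fin n) // s.card = k},
        schurEval k μ (fun i => lam ((I.1.orderIsoOfFin I.2) i : Fin n)) /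
          ∏ i ∈ I.1, ∏ j ∈ I.1ᶜ, (lam i - lam j) =
      (if μ = fun _ => n - k then (1 : F) else 0) :=
  sum_schur_div_prod_general n k hk lam hlam μ hμ hμle
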